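/- arXiv:1009.5531 — 2 statements merged into one kernel-verified Lean document; each statement's English description precedes it below -/
import Mathlib

section
/- Let G be a group presented by ⟨X | R⟩ with R symmetrically closed, and suppose every relator in R has length exactly n. Let W = (e_i^{R₁})⁻¹ e_j^{R₁} (e_ℓ^{R₂})⁻¹ e_k^{R₂} be a word of length 4 over a new alphabet E = {e_i^R : R ∈ R, 1 ≤ i ≤ |R|}, where the data (R₁, R₂, i, j, k, ℓ) satisfies i ≠ j and k ≠ ℓ. Then any subword of length 3 of a cyclic conjugate of W (or its inverse) determines W up to cyclic conjugation and inversion. In particular, in the family of all such length-4 words, no two distinct (up to cyclic conjugation and inversion) words share a common subword of length 3 of cyclic conjugates. -/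
/-!
Every relator `a⁻¹ b c⁻¹ d` here is balanced: the indices of its inverse letters and of its
positive letters have the same sum mod `n` (this is `hlen`), and this survives cyclic
conjugation and inversion. In any cyclic conjugate of such a word (or of its inverse) the
signs alternate, each letter shares its relator with one neighbour, and the balance fixes the
remaining index mod `n`. So three consecutive letters determine the fourth, hence the whole
cyclic word.
-/

/-- The formal inverse of a word over a signed alphabet: reverse the word and
flip all the signs. -/
def wInv {A : Type*} (w : List (A × Bool)) : List (A × Bool) :=
  w.reverse.map fun p => (p.1, !p.2)

/-- The length-4 relator `(e_i^{R₁})⁻¹ e_j^{R₁} (e_ℓ^{R₂})⁻¹ e_k^{R₂}` of the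
barycentric subdivision presentation, over the alphabet of formal symbols
`e_i^R` (modelled as pairs `(R, i)`), with `false` marking an inverse letter. -/
def bsdWord {R : Type*} (R₁ : R) (i j : ℕ) (R₂ : R) (k ℓ : ℕ) :
    List ((R × ℕ) × Bool) :=
  [((R₁, i), false), ((R₁, j), true), ((R₂, ℓ), false), ((R₂, k), true)]

lemma wInv_wInv {A : Type*} (w : List (A × Bool)) : wInv (wInv w) = w := by
  simp [wInv, Function.comp_def]

lemma List.IsRotated.wInv {A : Type*} {w w' : List (A × Bool)} (h : w ~r w') :
    _root_.wInv w ~r _root_.wInv w' :=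
  h.reverse.map _

lemma isRotated_or_wInv_isRotated_of_common {A : Type*} {V V' X : List (A × Bool)}
    (h : V ~r X ∨ wInv V ~r X) (h' : V' ~r X ∨ wInv V' ~r X) :
    V ~r V' ∨ wInv V ~r V' := by
  rcases h with h | h <;> rcases h' with h' | h'
  · exact .inl (h.trans h'.symm)
  · exact .inr (by simpa only [wInv_wInv] using (h.trans h'.symm).wInv)
  · exact .inr (h.trans h'.symm)
  · exact .inl (by simpa only [wInv_wInv] using (h.trans h'.symm).wInv)

lemma wInv_bsdWord {R : Type*} (R₁ R₂ : R) (i j k ℓ : ℕ) :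
    wInv (bsdWord R₁ i j R₂ k ℓ) = bsdWord R₂ k ℓ R₁ i j :=
  rfl

lemma Nat.add_modEq_add_of_sub_mod_eq {n i j k ℓ : ℕ} (hi : i < n) (hk : k < n)
    (h : (j + n - i) % n = (ℓ + n - k) % n) : i + ℓ ≡ j + k [MOD n] := by
  have h' : j + n - i + (i + k) ≡ ℓ + n - k + (i + k) [MOD n] := Nat.ModEq.add_right _ h
  rw [show j + n - i + (i + k) = j + k + n by omega,
    show ℓ + n - k + (i + k) = i + ℓ + n by omega] at h'
  exact (Nat.ModEq.add_right_cancel' n h').symm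

lemma Nat.add_sub_mod_eq_of_modEq {n a b c d : ℕ} (hc : c < n) (hd : d < n)
    (h : a + b ≡ c + d [MOD n]) : (a + b + n - c) % n = d := by
  have h' : a + b + n - c + c ≡ d + n + c [MOD n] := by
    rw [show a + b + n - c + c = a + b + n by omega, show d + n + c = c + d + n by omega]
    exact h.add_right n
  rw [← Nat.mod_eq_of_lt hd]
  exact (Nat.ModEq.add_right_cancel' c h').trans (Nat.add_mod_right d n)

section

variable {R : Type*}

/-- In a cyclic conjugate of a balanced `bsdWord` the letter after `u₂` has the opposite sign,
shares its relator with `u₂` if `u₀` is an inverse letter and with `u₀` otherwise, and its index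
restores the balance. -/
def fourthLetter (n : ℕ) (u₀ u₁ u₂ : (R × ℕ) × Bool) : (R × ℕ) × Bool :=
  ((if u₀.2 then u₀.1.1 else u₂.1.1, (u₀.1.2 + u₂.1.2 + n - u₁.1.2) % n), !u₂.2)

lemma bsdWord_rotate_eq_fourthLetter {n : ℕ} {R₁ R₂ : R} {i j k ℓ : ℕ}
    (hi : i < n) (hj : j < n) (hk : k < n) (hℓ : ℓ < n) (hbal : i + ℓ ≡ j + k [MOD n]) (m : ℕ) :
    ∃ u₀ u₁ u₂, (bsdWord R₁ i j R₂ k ℓ).rotate m = [u₀, u₁, u₂, fourthLetter n u₀ u₁ u₂] := by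
  rw [← List.rotate_mod, show (bsdWord R₁ i j R₂ k ℓ).length = 4 from rfl]
  obtain hr | hr | hr | hr : m % 4 = 0 ∨ m % 4 = 1 ∨ m % 4 = 2 ∨ m % 4 = 3 := by omega
  all_goals rw [hr]
  · refine ⟨((R₁, i), false), ((R₁, j), true), ((R₂, ℓ), false), ?_⟩
    simpa [bsdWord, fourthLetter] using (Nat.add_sub_mod_eq_of_modEq hj hk hbal).symm
  · refine ⟨((R₁, j), true), ((R₂, ℓ), false), ((R₂, k), true), ?_⟩
    have hbal' : j + k ≡ ℓ + i [MOD n] := add_comm i ℓ ▸ hbal.symm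
    simpa [bsdWord, fourthLetter, List.rotate] using (Nat.add_sub_mod_eq_of_modEq hℓ hi hbal').symm
  · refine ⟨((R₂, ℓ), false), ((R₂, k), true), ((R₁, i), false), ?_⟩
    have hbal' : ℓ + i ≡ k + j [MOD n] := add_comm i ℓ ▸ add_comm j k ▸ hbal
    simpa [bsdWord, fourthLetter, List.rotate] using (Nat.add_sub_mod_eq_of_modEq hk hj hbal').symm
  · refine ⟨((R₂, k), true), ((R₁, i), false), ((R₁, j), true), ?_⟩
    have hbal' : k + j ≡ i + ℓ [MOD n] := add_comm j k ▸ hbal.symm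
    simpa [bsdWord, fourthLetter, List.rotate] using (Nat.add_sub_mod_eq_of_modEq hi hℓ hbal').symm

lemma isRotated_of_prefix_rotate {n : ℕ} {R₁ R₂ : R} {i j k ℓ : ℕ}
    (hi : i < n) (hj : j < n) (hk : k < n) (hℓ : ℓ < n) (hbal : i + ℓ ≡ j + k [MOD n])
    {u₀ u₁ u₂ : (R × ℕ) × Bool} {m : ℕ} (h : [u₀, u₁, u₂] <+: (bsdWord R₁ i j R₂ k ℓ).rotate m) :
    bsdWord R₁ i j R₂ k ℓ ~r [u₀, u₁, u₂, fourthLetter n u₀ u₁ u₂] := by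
  obtain ⟨a, b, c, hrot⟩ := bsdWord_rotate_eq_fourthLetter hi hj hk hℓ hbal m
  rw [hrot] at h
  obtain ⟨rfl, rfl, rfl⟩ : u₀ = a ∧ u₁ = b ∧ u₂ = c := by simpa using h
  exact ⟨m, hrot⟩

lemma isRotated_or_wInv_isRotated_of_prefix {n : ℕ} {R₁ R₂ : R} {i j k ℓ : ℕ}
    (hi : i < n) (hj : j < n) (hk : k < n) (hℓ : ℓ < n) (hbal : i + ℓ ≡ j + k [MOD n])
    {u₀ u₁ u₂ : (R × ℕ) × Bool} (h : ∃ m, [u₀, u₁, u₂] <+: (bsdWord R₁ i j R₂ k ℓ).rotate m ∨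
      [u₀, u₁, u₂] <+: (wInv (bsdWord R₁ i j R₂ k ℓ)).rotate m) :
    bsdWord R₁ i j R₂ k ℓ ~r [u₀, u₁, u₂, fourthLetter n u₀ u₁ u₂] ∨
      wInv (bsdWord R₁ i j R₂ k ℓ) ~r [u₀, u₁, u₂, fourthLetter n u₀ u₁ u₂] := by
  obtain ⟨m, h | h⟩ := h
  · exact .inl (isRotated_of_prefix_rotate hi hj hk hℓ hbal h)
  · rw [wInv_bsdWord] at h ⊢
    have hbal' : k + j ≡ ℓ + i [MOD n] := add_comm j k ▸ add_comm i ℓ ▸ hbal.symm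
    exact .inr (isRotated_of_prefix_rotate hk hℓ hi hj hbal' h)

end

theorem stmt6_general {R : Type*} (n : ℕ)
    (R₁ R₂ S₁ S₂ : R) (i j k ℓ i' j' k' ℓ' : ℕ)
    (hi : i < n) (hj : j < n) (hk : k < n) (hℓ : ℓ < n)
    (hi' : i' < n) (hj' : j' < n) (hk' : k' < n) (hℓ' : ℓ' < n)
    (hlen : (j + n - i) % n = (ℓ + n - k) % n)
    (hlen' : (j' + n - i') % n = (ℓ' + n - k') % n)
    (U : List ((R × ℕ) × Bool)) (hU : U.length = 3)
    (h1 : ∃ m, U <+: (bsdWord R₁ i j R₂ k ℓ).rotate m ∨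
      U <+: (wInv (bsdWord R₁ i j R₂ k ℓ)).rotate m)
    (h2 : ∃ m, U <+: (bsdWord S₁ i' j' S₂ k' ℓ').rotate m ∨
      U <+: (wInv (bsdWord S₁ i' j' S₂ k' ℓ')).rotate m) :
    ∃ t, bsdWord S₁ i' j' S₂ k' ℓ' = (bsdWord R₁ i j R₂ k ℓ).rotate t ∨
      bsdWord S₁ i' j' S₂ k' ℓ' = (wInv (bsdWord R₁ i j R₂ k ℓ)).rotate t := by
  obtain ⟨u₀, u₁, u₂, rfl⟩ := List.length_eq_three.mp hU
  have hW := isRotated_or_wInv_isRotated_of_prefix hi hj hk hℓ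
    (Nat.add_modEq_add_of_sub_mod_eq hi hk hlen) h1
  have hW' := isRotated_or_wInv_isRotated_of_prefix hi' hj' hk' hℓ'
    (Nat.add_modEq_add_of_sub_mod_eq hi' hk' hlen') h2
  obtain ⟨t, ht⟩ | ⟨t, ht⟩ := isRotated_or_wInv_isRotated_of_common hW hW'
  exacts [⟨t, .inl ht.symm⟩, ⟨t, .inr ht.symm⟩]

/-- If all relators have length `n` (so positions are residues mod `n`, and the
two halves of a barycentric-subdivision relator correspond to the same piece,
forcing `(j - i) ≡ (ℓ - k) mod n`), then any common length-3 subword of cyclic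
conjugates of two such relators (or of their inverses) forces the two relators
to agree up to cyclic conjugation and inversion: pieces have length at most 2. -/
theorem stmt6 {R : Type*} (n : ℕ) (hn : 0 < n)
    (R₁ R₂ S₁ S₂ : R) (i j k ℓ i' j' k' ℓ' : ℕ)
    (hi : i < n) (hj : j < n) (hk : k < n) (hℓ : ℓ < n)
    (hi' : i' < n) (hj' : j' < n) (hk' : k' < n) (hℓ' : ℓ' < n)
    (hij : i ≠ j) (hkℓ : k ≠ ℓ) (hij' : i' ≠ j') (hkℓ' : k' ≠ ℓ')
    (hlen : (j + n - i) % n = (ℓ + n - k) % n)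
    (hlen' : (j' + n - i') % n = (ℓ' + n - k') % n)
    (U : List ((R × ℕ) × Bool)) (hU : U.length = 3)
    (h1 : ∃ m, U <+: (bsdWord R₁ i j R₂ k ℓ).rotate m ∨
      U <+: (wInv (bsdWord R₁ i j R₂ k ℓ)).rotate m)
    (h2 : ∃ m, U <+: (bsdWord S₁ i' j' S₂ k' ℓ').rotate m ∨
      U <+: (wInv (bsdWord S₁ i' j' S₂ k' ℓ')).rotate m) :
    ∃ t, bsdWord S₁ i' j' S₂ k' ℓ' = (bsdWord R₁ i j R₂ k ℓ).rotate t ∨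
      bsdWord S₁ i' j' S₂ k' ℓ' = (wInv (bsdWord R₁ i j R₂ k ℓ)).rotate t :=
  stmt6_general n R₁ R₂ S₁ S₂ i j k ℓ i' j' k' ℓ' hi hj hk hℓ hi' hj' hk' hℓ' hlen hlen' U hU h1 h2
end

section
/- Let ⟨X | R⟩ be a presentation satisfying the algebraic T(4) condition: for any three elements R₁, R₂, R₃ of the symmetric closure of R, at least one of the products R₁R₂, R₂R₃, R₃R₁ is freely reduced as written. Then there do not exist pieces P₁, P₂, P₃ and words W₁, W₂, W₃ such that P₁W₁P₂⁻¹, P₂W₂P₃⁻¹, and P₃W₃P₁⁻¹ all belong to the symmetric closure of R with each of these words freely and cyclically reduced. -/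
/-! Any nonempty word `P` gives the non-reduced junction `wInv P ++ P`, whose middle letters
are `x⁻¹ x`. In the product of two consecutive relators of the triangle, e.g.
`(P₁W₁P₂⁻¹)(P₂W₂P₃⁻¹)`, this junction occurs with `P = P₂`; so none of the three products
demanded by `T(4)` is reduced. -/

/-- A word over a signed alphabet is (freely) reduced if it has no adjacent
cancelling pair `x x⁻¹`. -/
def Reduced {A : Type*} (w : List (A × Bool)) : Prop :=
  List.Chain' (fun p q : A × Bool => p.1 = q.1 → p.2 = q.2) w

/-- A word is cyclically reduced if all its cyclic conjugates are reduced. -/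
def CyclicallyReduced {A : Type*} (w : List (A × Bool)) : Prop :=
  ∀ m, Reduced (w.rotate m)

/-- `P` is a piece: a nonempty common prefix of two distinct elements of the
symmetrized relator set. -/
def IsPiece {A : Type*} (Rs : Set (List (A × Bool))) (P : List (A × Bool)) : Prop :=
  P ≠ [] ∧ ∃ W₁ W₂ : List (A × Bool), W₁ ≠ W₂ ∧ P ++ W₁ ∈ Rs ∧ P ++ W₂ ∈ Rs

lemma not_reduced_wInv_append_self {A : Type*} {P : List (A × Bool)} (hP : P ≠ []) :
    ¬ Reduced (wInv P ++ P) := by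
  obtain ⟨⟨a, b⟩, t, rfl⟩ := List.exists_cons_of_ne_nil hP
  intro h
  have hpair : [(a, !b), (a, b)] <:+: wInv ((a, b) :: t) ++ (a, b) :: t :=
    ⟨t.reverse.map (fun p => (p.1, !p.2)), t, by simp [wInv]⟩
  simpa using List.isChain_pair.mp (h.infix hpair) rfl

lemma not_reduced_append_wInv_append {A : Type*} {P : List (A × Bool)} (hP : P ≠ [])
    (U W V : List (A × Bool)) : ¬ Reduced (U ++ wInv P ++ (P ++ W ++ V)) :=
  fun h => not_reduced_wInv_append_self hP (h.infix ⟨U, W ++ V, by simp⟩)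

/-- Under the algebraic `T(4)` condition on the symmetric closure `Rs`, there is
no triangle configuration: no pieces `P₁, P₂, P₃` and words `W₁, W₂, W₃` such
that `P₁W₁P₂⁻¹`, `P₂W₂P₃⁻¹`, `P₃W₃P₁⁻¹` are all freely and cyclically reduced
members of `Rs`. -/
theorem stmt13 {X : Type*} (Rs : Set (List (X × Bool)))
    (hT4 : ∀ R₁ ∈ Rs, ∀ R₂ ∈ Rs, ∀ R₃ ∈ Rs,
      Reduced (R₁ ++ R₂) ∨ Reduced (R₂ ++ R₃) ∨ Reduced (R₃ ++ R₁)) :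
    ¬ ∃ P₁ P₂ P₃ W₁ W₂ W₃ : List (X × Bool),
      IsPiece Rs P₁ ∧ IsPiece Rs P₂ ∧ IsPiece Rs P₃ ∧
      (P₁ ++ W₁ ++ wInv P₂ ∈ Rs ∧ CyclicallyReduced (P₁ ++ W₁ ++ wInv P₂)) ∧
      (P₂ ++ W₂ ++ wInv P₃ ∈ Rs ∧ CyclicallyReduced (P₂ ++ W₂ ++ wInv P₃)) ∧
      (P₃ ++ W₃ ++ wInv P₁ ∈ Rs ∧ CyclicallyReduced (P₃ ++ W₃ ++ wInv P₁)) := by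
  rintro ⟨P₁, P₂, P₃, W₁, W₂, W₃, ⟨hP₁, -⟩, ⟨hP₂, -⟩, ⟨hP₃, -⟩,
    ⟨hR₁, -⟩, ⟨hR₂, -⟩, ⟨hR₃, -⟩⟩
  rcases hT4 _ hR₁ _ hR₂ _ hR₃ with h | h | h
  · exact not_reduced_append_wInv_append hP₂ _ _ _ h
  · exact not_reduced_append_wInv_append hP₃ _ _ _ h
  · exact not_reduced_append_wInv_append hP₁ _ _ _ h
end
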